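/- Let $\gamma \in [0,1)$, let $P_\pi$ be row-stochastic matrices indexed by policies, and define the Neumann-series expansion: for a fixed policy $\pi$ with value recursion $\hat{\mathcal{V}}^{t} = \pi\diamond + \gamma \hat{P}^{t-1}_\pi \hat{\mathcal{V}}^{t-1}$, one has $\hat{\mathcal{V}}^{t} = V^\pi_\diamond - \sum_{i=t+1}^\infty \gamma^i (P_\pi)^i (\pi\diamond) + \sum_{i=0}^{t} \gamma^{i+1} (P_\pi)^i (\hat{P}^{t-i-1}_\pi \hat{\mathcal{V}}^{t-i-1} - P_\pi \hat{\mathcal{V}}^{t-i-1})$, where $V^\pi_\diamond = \sum_{i=0}^\infty \gamma^i (P_\pi)^i (\pi\diamond)$. Consequently, if each empirical deviation term satisfies $\|\hat{P}^{j}_\pi \hat{\mathcal{V}}^{j} - P_\pi \hat{\mathcal{V}}^{j}\|_\infty \leq \epsilon_0$ and $\|\pi\diamond\|_\infty \leq 1$, then $\|\hat{\mathcal{V}}^t - V^\pi_\diamond\|_\infty \leq \frac{\gamma^{t+1}}{1-\gamma} + \frac{\epsilon_0}{1-\gamma}$. -/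

import Mathlib

open Matrix Finset

lemma stoch_bound {n : Type*} [Fintype n] (P : Matrix n n ℝ)
    (hPnn : ∀ i j, 0 ≤ P i j) (hProw : ∀ i, ∑ j, P i j = 1)
    (v : n → ℝ) (M : ℝ) (hv : ∀ s, |v s| ≤ M) : ∀ s, |(P *ᵥ v) s| ≤ M := by
  intro s
  have h1 : (P *ᵥ v) s = ∑ j, P s j * v j := rfl
  rw [h1]
  calc |∑ j, P s j * v j| ≤ ∑ j, |P s j * v j| := Finset.abs_sum_le_sum_abs _ _
    _ ≤ ∑ j, P s j * M := by
        apply Finset.sum_le_sum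
        intro j _
        rw [abs_mul, abs_of_nonneg (hPnn s j)]
        exact mul_le_mul_of_nonneg_left (hv j) (hPnn s j)
    _ = M := by rw [← Finset.sum_mul, hProw, one_mul]

lemma stoch_pow_bound {n : Type*} [Fintype n] [DecidableEq n] (P : Matrix n n ℝ)
    (hPnn : ∀ i j, 0 ≤ P i j) (hProw : ∀ i, ∑ j, P i j = 1)
    (v : n → ℝ) (M : ℝ) (hv : ∀ s, |v s| ≤ M) : ∀ k s, |((P ^ k) *ᵥ v) s| ≤ M := by
  intro k
  induction k with
  | zero => simpa [Matrix.one_mulVec] using hv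
  | succ k ih =>
      intro s
      have : (P ^ (k+1)) *ᵥ v = P *ᵥ ((P ^ k) *ᵥ v) := by
        rw [Matrix.mulVec_mulVec, ← pow_succ']
      rw [this]
      exact stoch_bound P hPnn hProw _ M ih s

lemma mulVec_finsum {n : Type*} [Fintype n] (P : Matrix n n ℝ) (F : Finset ℕ) (f : ℕ → n → ℝ) :
    P *ᵥ (∑ i ∈ F, f i) = ∑ i ∈ F, P *ᵥ (f i) := by
  induction F using Finset.cons_induction with
  | empty => simp
  | cons a F ha ih =>
      rw [Finset.sum_cons, Finset.sum_cons, Matrix.mulVec_add, ih]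

/-- Fixed-policy evaluation error decomposition: Neumann-series identity for
the empirical policy-evaluation iterates and the resulting sup-norm error
bound `‖V̂^t - V^π‖∞ ≤ γ^{t+1}/(1-γ) + ε₀/(1-γ)`. -/
theorem policy_evaluation_error {n : Type*} [Fintype n] [DecidableEq n]
    (gamma eps0 : ℝ) (hgamma0 : 0 ≤ gamma) (hgamma1 : gamma < 1) (heps : 0 ≤ eps0)
    (P : Matrix n n ℝ)
    (hPnn : ∀ i j, 0 ≤ P i j) (hProw : ∀ i, ∑ j, P i j = 1)
    (Phat : ℕ → Matrix n n ℝ)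
    (hPhnn : ∀ t i j, 0 ≤ Phat t i j) (hPhrow : ∀ t i, ∑ j, Phat t i j = 1)
    (rpi : n → ℝ) (hr : ∀ s, |rpi s| ≤ 1)
    (Vpi : n → ℝ) (hVpi : Vpi = rpi + gamma • (P *ᵥ Vpi))
    (Vhat : ℕ → n → ℝ)
    (h0 : Vhat 0 = rpi)
    (hrec : ∀ t, Vhat (t + 1) = rpi + gamma • (Phat t *ᵥ Vhat t))
    (hdev : ∀ t s, |(Phat t *ᵥ Vhat t) s - (P *ᵥ Vhat t) s| ≤ eps0) :
    (∀ t s, Vhat t s =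
      Vpi s - (∑' i : ℕ, gamma ^ (t + 1 + i) * ((P ^ (t + 1 + i)) *ᵥ rpi) s) +
        ∑ i ∈ range t, gamma ^ (i + 1) *
          ((P ^ i) *ᵥ (fun s' => (Phat (t - i - 1) *ᵥ Vhat (t - i - 1)) s' -
            (P *ᵥ Vhat (t - i - 1)) s')) s) ∧
    (∀ t s, |Vhat t s - Vpi s| ≤
      gamma ^ (t + 1) / (1 - gamma) + eps0 / (1 - gamma)) := by
  rcases isEmpty_or_nonempty n with hE | hne
  · exact ⟨fun t s => (hE.false s).elim, fun t s => (hE.false s).elim⟩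
  have h1g : 0 < 1 - gamma := by linarith
  -- deviation vectors
  set D : ℕ → n → ℝ := fun j => Phat j *ᵥ Vhat j - P *ᵥ Vhat j with hDdef
  have hD : ∀ j, (fun s' => (Phat j *ᵥ Vhat j) s' - (P *ᵥ Vhat j) s') = D j := fun _ => rfl
  -- bound on Vpi
  have hMv : ∀ s, |Vpi s| ≤ 1 / (1 - gamma) := by
    set M := Finset.univ.sup' Finset.univ_nonempty (fun j => |Vpi j|) with hM
    have hle : ∀ s, |Vpi s| ≤ M := fun s => Finset.le_sup' (fun j => |Vpi j|) (Finset.mem_univ s)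
    obtain ⟨j, -, hj⟩ := Finset.exists_mem_eq_sup' Finset.univ_nonempty (fun j => |Vpi j|)
    have hMle : M ≤ 1 + gamma * M := by
      have hVj : Vpi j = rpi j + gamma * (P *ᵥ Vpi) j := by
        conv_lhs => rw [hVpi]
        simp
      have h3 := stoch_bound P hPnn hProw Vpi M hle j
      calc M = |Vpi j| := by rw [hM, hj]
        _ = |rpi j + gamma * (P *ᵥ Vpi) j| := by rw [hVj]
        _ ≤ |rpi j| + |gamma * (P *ᵥ Vpi) j| := abs_add_le _ _
        _ ≤ 1 + gamma * M := by
            rw [abs_mul, abs_of_nonneg hgamma0]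
            exact add_le_add (hr j) (mul_le_mul_of_nonneg_left h3 hgamma0)
    have hM1 : M ≤ 1 / (1 - gamma) := by
      rw [le_div_iff₀ h1g]; nlinarith
    exact fun s => le_trans (hle s) hM1
  -- telescoping step
  have hrpi : rpi = Vpi - gamma • (P *ᵥ Vpi) := by
    rw [eq_sub_iff_add_eq]; exact hVpi.symm
  have hstep : ∀ (k : ℕ) (s : n), gamma ^ k * ((P ^ k) *ᵥ rpi) s =
      gamma ^ k * ((P ^ k) *ᵥ Vpi) s - gamma ^ (k + 1) * ((P ^ (k + 1)) *ᵥ Vpi) s := by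
    intro k s
    have h1 : (P ^ k) *ᵥ rpi = (P ^ k) *ᵥ Vpi - gamma • ((P ^ (k+1)) *ᵥ Vpi) := by
      rw [hrpi, Matrix.mulVec_sub, Matrix.mulVec_smul, pow_succ, ← Matrix.mulVec_mulVec]
    rw [h1]
    simp [Pi.sub_apply, pow_succ]
    ring
  -- tail identity
  have htail : ∀ (a m : ℕ) (s : n), ∑ i ∈ range m, gamma ^ (a + i) * ((P ^ (a + i)) *ᵥ rpi) s =
      gamma ^ a * ((P ^ a) *ᵥ Vpi) s - gamma ^ (a + m) * ((P ^ (a + m)) *ᵥ Vpi) s := by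
    intro a m s
    induction m with
    | zero => simp
    | succ m ih =>
        rw [Finset.sum_range_succ, ih, hstep (a + m) s]
        ring_nf
  -- tsum value
  have htsum : ∀ (t : ℕ) (s : n),
      (∑' i : ℕ, gamma ^ (t + 1 + i) * ((P ^ (t + 1 + i)) *ᵥ rpi) s) =
      gamma ^ (t + 1) * ((P ^ (t + 1)) *ᵥ Vpi) s := by
    intro t s
    have hsummable : Summable (fun i => gamma ^ (t + 1 + i) * ((P ^ (t + 1 + i)) *ᵥ rpi) s) := by
      apply Summable.of_norm_bounded (g := fun i => gamma ^ (t + 1) * gamma ^ i)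
        ((summable_geometric_of_lt_one hgamma0 hgamma1).mul_left _)
      intro i
      rw [Real.norm_eq_abs, abs_mul, abs_of_nonneg (pow_nonneg hgamma0 _), pow_add]
      have h := mul_le_mul_of_nonneg_left (stoch_pow_bound P hPnn hProw rpi 1 hr (t+1+i) s)
        (show (0:ℝ) ≤ gamma ^ (t+1) * gamma ^ i by positivity)
      simpa [pow_add] using h
    have hps : Filter.Tendsto (fun m => ∑ i ∈ range m,
        gamma ^ (t + 1 + i) * ((P ^ (t + 1 + i)) *ᵥ rpi) s) Filter.atTop
        (nhds (gamma ^ (t + 1) * ((P ^ (t + 1)) *ᵥ Vpi) s)) := by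
      have heq : ∀ m, ∑ i ∈ range m, gamma ^ (t + 1 + i) * ((P ^ (t + 1 + i)) *ᵥ rpi) s =
          gamma ^ (t + 1) * ((P ^ (t + 1)) *ᵥ Vpi) s -
          gamma ^ (t + 1 + m) * ((P ^ (t + 1 + m)) *ᵥ Vpi) s := fun m => htail (t+1) m s
      simp only [heq]
      have htail0 : Filter.Tendsto
          (fun m => gamma ^ (t + 1 + m) * ((P ^ (t + 1 + m)) *ᵥ Vpi) s) Filter.atTop (nhds 0) := by
        apply squeeze_zero_norm (a := fun m => gamma ^ (t + 1) * (1 / (1 - gamma)) * gamma ^ m)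
        · intro m
          rw [Real.norm_eq_abs, abs_mul, abs_of_nonneg (pow_nonneg hgamma0 _), pow_add]
          have := stoch_pow_bound P hPnn hProw Vpi (1/(1-gamma)) hMv (t+1+m) s
          calc gamma ^ (t+1) * gamma ^ m * |((P ^ (t + 1 + m)) *ᵥ Vpi) s|
              ≤ gamma ^ (t+1) * gamma ^ m * (1 / (1 - gamma)) := by
                apply mul_le_mul_of_nonneg_left this (by positivity)
            _ = gamma ^ (t + 1) * (1 / (1 - gamma)) * gamma ^ m := by ring
        · simpa using (tendsto_pow_atTop_nhds_zero_of_lt_one hgamma0 hgamma1).const_mul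
            (gamma ^ (t + 1) * (1 / (1 - gamma)))
      simpa using Filter.Tendsto.sub tendsto_const_nhds htail0
    exact tendsto_nhds_unique hsummable.hasSum.tendsto_sum_nat hps
  -- claim A
  have claimA : ∀ t, Vhat t = (∑ i ∈ range (t + 1), gamma ^ i • ((P ^ i) *ᵥ rpi)) +
      ∑ i ∈ range t, gamma ^ (i + 1) • ((P ^ i) *ᵥ D (t - i - 1)) := by
    intro t
    induction t with
    | zero => simp [h0, Matrix.one_mulVec]
    | succ t ih =>
        rw [hrec t]
        have hsplit : Phat t *ᵥ Vhat t = P *ᵥ Vhat t + D t := by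
          show _ = _ + (Phat t *ᵥ Vhat t - P *ᵥ Vhat t); abel
        rw [hsplit]
        conv_lhs => rw [ih]
        rw [Matrix.mulVec_add, mulVec_finsum, mulVec_finsum]
        have e1 : ∀ i : ℕ, P *ᵥ (gamma ^ i • ((P ^ i) *ᵥ rpi)) = gamma ^ i • ((P ^ (i+1)) *ᵥ rpi) := by
          intro i
          rw [Matrix.mulVec_smul, Matrix.mulVec_mulVec, ← pow_succ']
        have e2 : ∀ i : ℕ, P *ᵥ (gamma ^ (i+1) • ((P ^ i) *ᵥ D (t - i - 1))) =
            gamma ^ (i+1) • ((P ^ (i+1)) *ᵥ D (t - i - 1)) := by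
          intro i
          rw [Matrix.mulVec_smul, Matrix.mulVec_mulVec, ← pow_succ']
        simp only [e1, e2]
        rw [Finset.sum_range_succ' (fun i => gamma ^ i • ((P ^ i) *ᵥ rpi)) (t+1),
          Finset.sum_range_succ' (fun i => gamma ^ (i+1) • ((P ^ i) *ᵥ D (t + 1 - i - 1))) t]
        simp only [pow_zero, one_smul, Matrix.one_mulVec, pow_one, Nat.add_sub_cancel,
          Nat.succ_sub_succ, Nat.sub_zero, zero_add]
        rw [smul_add, smul_add, Finset.smul_sum, Finset.smul_sum]
        simp only [smul_smul, ← pow_succ']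
        abel
  -- pointwise fixed-point equation
  have hVs : ∀ s, Vpi s = rpi s + gamma * (P *ᵥ Vpi) s := by
    intro s
    conv_lhs => rw [hVpi]
    simp
  -- part 2
  have claim2 : ∀ t s, |Vhat t s - Vpi s| ≤
      gamma ^ (t + 1) / (1 - gamma) + eps0 / (1 - gamma) := by
    intro t
    induction t with
    | zero =>
        intro s
        rw [h0]
        have h4 : rpi s - Vpi s = -(gamma * (P *ᵥ Vpi) s) := by rw [hVs s]; ring
        rw [h4, abs_neg, abs_mul, abs_of_nonneg hgamma0]
        have h3 := stoch_bound P hPnn hProw Vpi _ hMv s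
        have h5 : gamma * |(P *ᵥ Vpi) s| ≤ gamma * (1 / (1 - gamma)) :=
          mul_le_mul_of_nonneg_left h3 hgamma0
        have heps' : 0 ≤ eps0 / (1 - gamma) := by positivity
        have h6 : gamma * (1 / (1 - gamma)) = gamma ^ (0 + 1) / (1 - gamma) := by ring
        linarith
    | succ t ih =>
        intro s
        have hsub : ∀ s', (P *ᵥ (fun j => Vhat t j - Vpi j)) s' =
            (P *ᵥ Vhat t) s' - (P *ᵥ Vpi) s' := by
          intro s'
          have h7 : (fun j => Vhat t j - Vpi j) = Vhat t - Vpi := rfl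
          rw [h7, Matrix.mulVec_sub, Pi.sub_apply]
        have key : Vhat (t + 1) s - Vpi s =
            gamma * ((Phat t *ᵥ Vhat t) s - (P *ᵥ Vhat t) s) +
            gamma * (P *ᵥ (fun j => Vhat t j - Vpi j)) s := by
          rw [hrec t, hsub s]
          have h8 : Vpi = rpi + gamma • (P *ᵥ Vpi) := hVpi
          conv_lhs => rw [h8]
          simp only [Pi.add_apply, Pi.smul_apply, smul_eq_mul]
          ring
        rw [key]
        have b1 := hdev t s
        have b2 : |(P *ᵥ (fun j => Vhat t j - Vpi j)) s| ≤
            gamma ^ (t + 1) / (1 - gamma) + eps0 / (1 - gamma) :=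
          stoch_bound P hPnn hProw _ _ (fun j => ih j) s
        have habs : |gamma * ((Phat t *ᵥ Vhat t) s - (P *ᵥ Vhat t) s) +
            gamma * (P *ᵥ (fun j => Vhat t j - Vpi j)) s| ≤
            gamma * eps0 + gamma * (gamma ^ (t + 1) / (1 - gamma) + eps0 / (1 - gamma)) := by
          calc |gamma * ((Phat t *ᵥ Vhat t) s - (P *ᵥ Vhat t) s) +
              gamma * (P *ᵥ (fun j => Vhat t j - Vpi j)) s|
              ≤ |gamma * ((Phat t *ᵥ Vhat t) s - (P *ᵥ Vhat t) s)| +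
                |gamma * (P *ᵥ (fun j => Vhat t j - Vpi j)) s| := abs_add_le _ _
            _ ≤ gamma * eps0 + gamma * (gamma ^ (t + 1) / (1 - gamma) + eps0 / (1 - gamma)) := by
              rw [abs_mul, abs_mul, abs_of_nonneg hgamma0]
              exact add_le_add (mul_le_mul_of_nonneg_left b1 hgamma0)
                (mul_le_mul_of_nonneg_left b2 hgamma0)
        refine le_trans habs ?_
        have hps : gamma ^ (t + 1 + 1) = gamma ^ (t + 1) * gamma := pow_succ gamma (t + 1)
        rw [← add_div, ← add_div, le_div_iff₀ h1g, add_mul]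
        have hcancel : gamma * ((gamma ^ (t + 1) + eps0) / (1 - gamma)) * (1 - gamma) =
            gamma * (gamma ^ (t + 1) + eps0) := by
          field_simp
        rw [hcancel]
        nlinarith [pow_nonneg hgamma0 (t + 1), mul_nonneg heps (sq_nonneg (1 - gamma)),
          mul_nonneg (mul_nonneg heps hgamma0) hgamma0]
  refine ⟨?_, claim2⟩
  intro t s
  have hA := congrFun (claimA t) s
  simp only [Pi.add_apply, Finset.sum_apply, Pi.smul_apply, smul_eq_mul] at hA
  rw [htsum t s]
  simp only [hD]
  rw [hA]
  have hit : ∑ i ∈ range (t + 1), gamma ^ i * ((P ^ i) *ᵥ rpi) s =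
      Vpi s - gamma ^ (t + 1) * ((P ^ (t + 1)) *ᵥ Vpi) s := by
    have h9 := htail 0 (t + 1) s
    simpa [Matrix.one_mulVec] using h9
  rw [hit]
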